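/- arXiv:2111.01955 — 2 statements merged into one kernel-verified Lean document; each statement's English description precedes it below -/
import Mathlib

section
/- Greedy knapsack with budget overrun achieves at least the optimal reward: order the elements of a finite set U by non-increasing reward density r_e/c_e and let G be the shortest prefix whose total cost is at least B; then Σ_{e∈G} r_e ≥ max over all S ⊆ U with Σ_{e∈S} c_e ≤ B of Σ_{e∈S} r_e. -/
/-- Greedy knapsack with budget overrun achieves at least the optimal reward:
elements `0, …, n-1` are sorted in non-increasing order of reward density
`r x / c x`, costs are positive, rewards non-negative, and `τ ≤ n` is the
length of the shortest prefix whose total cost is at least `B`. Then the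
total reward of the greedy prefix is at least that of any feasible set. -/
theorem greedy_overflow_beats_opt (n : ℕ) (c r : ℕ → ℝ)
    (hc : ∀ x, x < n → 0 < c x) (hr : ∀ x, x < n → 0 ≤ r x)
    (hsorted : ∀ i j, i ≤ j → j < n → r j / c j ≤ r i / c i)
    (B : ℝ) (hB : 0 ≤ B) (htotal : B ≤ ∑ x ∈ Finset.range n, c x)
    (τ : ℕ) (hτn : τ ≤ n)
    (hτcost : B ≤ ∑ x ∈ Finset.range τ, c x)
    (hτmin : ∀ s, s < τ → ∑ x ∈ Finset.range s, c x < B) :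
    ∀ S ⊆ Finset.range n, ∑ e ∈ S, c e ≤ B →
      ∑ e ∈ S, r e ≤ ∑ x ∈ Finset.range τ, r x := by
  intro S hS hScost
  rcases Nat.eq_zero_or_pos τ with hτ0 | hτpos
  · subst hτ0
    simp only [Finset.range_zero, Finset.sum_empty] at hτcost ⊢
    have hS0 : S = ∅ := by
      by_contra h
      have hne : S.Nonempty := Finset.nonempty_iff_ne_empty.mpr h
      have : 0 < ∑ e ∈ S, c e :=
        Finset.sum_pos (fun x hx => hc x (Finset.mem_range.mp (hS hx))) hne
      linarith
    simp [hS0]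
  · set G := Finset.range τ with hG
    set ρ := r (τ - 1) / c (τ - 1) with hρ
    have hτ1n : τ - 1 < n := by omega
    have hcτ : 0 < c (τ - 1) := hc _ hτ1n
    have hρ0 : 0 ≤ ρ := div_nonneg (hr _ hτ1n) hcτ.le
    have key1 : ∀ e ∈ S \ G, r e ≤ ρ * c e := by
      intro e he
      rw [Finset.mem_sdiff, hG, Finset.mem_range, not_lt] at he
      have hen : e < n := Finset.mem_range.mp (hS he.1)
      have hce := hc e hen
      have hd : r e / c e ≤ ρ := hsorted (τ - 1) e (by omega) hen
      calc r e = (r e / c e) * c e := by field_simp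
        _ ≤ ρ * c e := by nlinarith
    have key2 : ∀ e ∈ G \ S, ρ * c e ≤ r e := by
      intro e he
      rw [Finset.mem_sdiff, hG, Finset.mem_range] at he
      have hen : e < n := by omega
      have hce := hc e hen
      have hd : ρ ≤ r e / c e := hsorted e (τ - 1) (by omega) hτ1n
      calc ρ * c e ≤ (r e / c e) * c e := by nlinarith
        _ = r e := by field_simp
    have hcsplitS : ∑ e ∈ S ∩ G, c e + ∑ e ∈ S \ G, c e = ∑ e ∈ S, c e :=
      Finset.sum_inter_add_sum_sdiff S G c
    have hcsplitG : ∑ e ∈ G ∩ S, c e + ∑ e ∈ G \ S, c e = ∑ e ∈ G, c e :=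
      Finset.sum_inter_add_sum_sdiff G S c
    have hinter : ∑ e ∈ S ∩ G, c e = ∑ e ∈ G ∩ S, c e := by rw [Finset.inter_comm]
    have hcdiff : ∑ e ∈ S \ G, c e ≤ ∑ e ∈ G \ S, c e := by
      have hGc : B ≤ ∑ e ∈ G, c e := hτcost
      linarith
    have hrdiff : ∑ e ∈ S \ G, r e ≤ ∑ e ∈ G \ S, r e := by
      calc ∑ e ∈ S \ G, r e ≤ ∑ e ∈ S \ G, ρ * c e := Finset.sum_le_sum key1
        _ = ρ * ∑ e ∈ S \ G, c e := by rw [Finset.mul_sum]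
        _ ≤ ρ * ∑ e ∈ G \ S, c e := by nlinarith
        _ = ∑ e ∈ G \ S, ρ * c e := by rw [Finset.mul_sum]
        _ ≤ ∑ e ∈ G \ S, r e := Finset.sum_le_sum key2
    have hrsplitS : ∑ e ∈ S ∩ G, r e + ∑ e ∈ S \ G, r e = ∑ e ∈ S, r e :=
      Finset.sum_inter_add_sum_sdiff S G r
    have hrsplitG : ∑ e ∈ G ∩ S, r e + ∑ e ∈ G \ S, r e = ∑ e ∈ G, r e :=
      Finset.sum_inter_add_sum_sdiff G S r
    have hrinter : ∑ e ∈ S ∩ G, r e = ∑ e ∈ G ∩ S, r e := by rw [Finset.inter_comm]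
    have : ∑ e ∈ S, r e ≤ ∑ e ∈ G, r e := by linarith
    exact this
end

section
/- Greedy prefix monotonicity under element removal: number elements 1..n in non-increasing density order with positive costs c_x; for budget B let τ be the smallest index with Σ_{x=1}^{τ} c_x ≥ B, and for an element e ≤ n let τ' be the smallest index with Σ_{x=1,x≠e}^{τ'} c_x ≥ B − c_e. Then τ' ≤ τ, and hence {1,…,τ'} \ {e} ⊆ {1,…,τ}. -/
/-- Greedy prefix monotonicity under element removal: elements `0, …, n-1` are
sorted in non-increasing density order with positive costs. `τ` is the smallest
prefix length with total cost `≥ B`; for an element `e < n`, `τ'` is the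
smallest prefix length whose cost excluding `e` is `≥ B − c e`. Then `τ' ≤ τ`,
and hence the prefix of length `τ'` with `e` removed is contained in the prefix
of length `τ`. -/
theorem greedy_prefix_removal (n : ℕ) (c r : ℕ → ℝ)
    (hc : ∀ x, x < n → 0 < c x)
    (hsorted : ∀ i j, i ≤ j → j < n → r j / c j ≤ r i / c i)
    (B : ℝ) (hB : 0 ≤ B) (e : ℕ) (he : e < n)
    (htotal : B ≤ ∑ x ∈ Finset.range n, c x)
    (htotal' : B - c e ≤ ∑ x ∈ (Finset.range n).erase e, c x)
    (τ : ℕ) (hτn : τ ≤ n)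
    (hτcost : B ≤ ∑ x ∈ Finset.range τ, c x)
    (hτmin : ∀ s, s < τ → ∑ x ∈ Finset.range s, c x < B)
    (τ' : ℕ) (hτ'n : τ' ≤ n)
    (hτ'cost : B - c e ≤ ∑ x ∈ (Finset.range τ').erase e, c x)
    (hτ'min : ∀ s, s < τ' → ∑ x ∈ (Finset.range s).erase e, c x < B - c e) :
    τ' ≤ τ ∧ (Finset.range τ').erase e ⊆ Finset.range τ := by
  have key : B - c e ≤ ∑ x ∈ (Finset.range τ).erase e, c x := by
    by_cases hmem : e ∈ Finset.range τ
    · have := Finset.add_sum_erase _ c hmem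
      have : ∑ x ∈ (Finset.range τ).erase e, c x = (∑ x ∈ Finset.range τ, c x) - c e := by
        linarith [Finset.add_sum_erase (Finset.range τ) c hmem]
      rw [this]; linarith
    · rw [Finset.erase_eq_of_notMem hmem]
      have := hc e he
      linarith
  have hle : τ' ≤ τ := by
    by_contra h
    push_neg at h
    exact absurd key (not_le.mpr (hτ'min τ h))
  exact ⟨hle, (Finset.erase_subset_erase _ (Finset.range_subset_range.mpr hle)).trans
    (Finset.erase_subset _ _)⟩
end
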